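/- Let n = 2^r p, where p is an odd prime and r ≥ 2, and let S be a U(n)-extremal sequence for the Gao constant. Call a term x of S an odd multiple of 2^i if x = 2^i·u in Z_n for some odd integer u. Then exactly one of the following holds: (i) for each i with 0 ≤ i ≤ r − 2, an odd multiple of 2^i occurs exactly once as a term of S; or (ii) there is a unique j with 0 ≤ j ≤ r − 2 such that odd multiples of 2^j occur exactly two times as terms of S, and for every i ≠ j with 0 ≤ i ≤ r − 2, an odd multiple of 2^i occurs exactly once as a term of S. -/

import Mathlib

open Classical in
/-- The number of terms of the sequence `S` satisfying the predicate `P`. -/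
noncomputable def pcount {α : Type*} (P : α → Prop) (S : List α) : ℕ :=
  S.countP fun x => decide (P x)

/-- `S` is an `A`-weighted zero-sum sequence in `ZMod n`: there are weights
`a i ∈ A` with `∑ a i * x i = 0`. -/
def IsWZSum {n : ℕ} (A : Set (ZMod n)) (S : List (ZMod n)) : Prop :=
  ∃ w : List (ZMod n), w.length = S.length ∧ (∀ a ∈ w, a ∈ A) ∧
    (List.zipWith (· * ·) w S).sum = 0

/-- `S` has an `A`-weighted zero-sum subsequence of length `t ≥ 1`. -/
def HasWZSS {n : ℕ} (A : Set (ZMod n)) (S : List (ZMod n)) (t : ℕ) : Prop :=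
  0 < t ∧ ∃ T : List (ZMod n), T.Sublist S ∧ T.length = t ∧ IsWZSum A T

/-- `S` has a nonempty `A`-weighted zero-sum subsequence. -/
def HasWZS {n : ℕ} (A : Set (ZMod n)) (S : List (ZMod n)) : Prop :=
  ∃ T : List (ZMod n), T.Sublist S ∧ T ≠ [] ∧ IsWZSum A T

/-- The `A`-weighted Davenport constant `D_A(n)`: the least `k > 0` such that every
sequence of length `k` in `ZMod n` has a nonempty `A`-weighted zero-sum subsequence. -/
noncomputable def DavC (n : ℕ) (A : Set (ZMod n)) : ℕ :=
  sInf {k | 0 < k ∧ ∀ S : List (ZMod n), S.length = k → HasWZS A S}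

/-- The `A`-weighted Gao constant `E_A(n)`: the least `k > 0` such that every
sequence of length `k` in `ZMod n` has an `A`-weighted zero-sum subsequence of length `n`. -/
noncomputable def GaoC (n : ℕ) (A : Set (ZMod n)) : ℕ :=
  sInf {k | 0 < k ∧ ∀ S : List (ZMod n), S.length = k → HasWZSS A S n}

/-- The set of units of `ZMod n`. -/
def U (n : ℕ) : Set (ZMod n) := {x | IsUnit x}

/-- An `A`-extremal sequence for the Gao constant: a sequence of length `E_A(n) - 1`
with no `A`-weighted zero-sum subsequence of length `n`. -/
def IsGaoExtremal (n : ℕ) (A : Set (ZMod n)) (S : List (ZMod n)) : Prop :=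
  S.length = GaoC n A - 1 ∧ ¬ HasWZSS A S n

/-- `S` and `T` are `A`-equivalent: there are a unit `c`, weights `a i ∈ A` and a
permutation matching the multiset of terms `c * y j` with the multiset `a i * x i`. -/
def AEquiv {n : ℕ} (A : Set (ZMod n)) (S T : List (ZMod n)) : Prop :=
  ∃ c : ZMod n, IsUnit c ∧ ∃ w : List (ZMod n), w.length = S.length ∧
    (∀ a ∈ w, a ∈ A) ∧ (T.map fun y => c * y).Perm (List.zipWith (· * ·) w S)

/-- A term `x` of a sequence in `ZMod n` is an odd multiple of `2 ^ i` if `x = 2 ^ i * u`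
for some odd integer `u`. -/
def IsOddMultiple (n i : ℕ) (x : ZMod n) : Prop :=
  ∃ u : ℤ, Odd u ∧ x = (2 : ZMod n) ^ i * (u : ZMod n)


/-!
By the Chinese remainder theorem `ZMod (2 ^ r * p) ≃+* ZMod (2 ^ r) × ZMod p`, and a list has a
unit-weighted zero sum iff both of its reductions have one. Modulo the odd prime `p` this fails
only when exactly one term is nonzero. Modulo `2 ^ r` the units are the odd residues, so a
unit-weighted sum of terms `2 ^ j * z`, some `z` odd, is `2 ^ j` times any residue whose parity
is the number of odd `z`: a zero sum exists iff the terms of least `2`-adic valuation `j < r`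
occur an even number of times. Hence whether a sequence has a zero-sum subsequence of length
`n = 2 ^ r * p` only depends on how many of its terms lie in each `2`-adic class and are prime to
`p`. Taking an even number of terms from one class and filling up from the classes above it, a
counting argument shows that a sequence of length `≥ n + r` without such a subsequence has length
exactly `n + r` and one term in each class `i ≤ r - 2`, except possibly for a single class with
two terms. With the sequence `0 ^ (n - 1) 1 2 4 ⋯ 2 ^ r` this also gives `E_U(n) = n + r + 1`.
-/

open Finset Classical

namespace List

variable {α : Type*}

theorem pcount_cons (P : α → Prop) (x : α) (l : List α) :
    pcount P (x :: l) = pcount P l + if P x then 1 else 0 := by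
  simp [pcount, countP_cons]

theorem pcount_congr {P Q : α → Prop} {l : List α} (h : ∀ x ∈ l, P x ↔ Q x) :
    pcount P l = pcount Q l :=
  countP_congr (by simpa using h)

theorem pcount_map {β : Type*} (P : β → Prop) (f : α → β) (l : List α) :
    pcount P (l.map f) = pcount (P ∘ f) l := by
  simp [pcount, countP_map, Function.comp_def]

theorem Sublist.pcount_le (P : α → Prop) {l₁ l₂ : List α} (h : l₁.Sublist l₂) :
    pcount P l₁ ≤ pcount P l₂ :=
  h.countP_le

theorem pcount_le_length (P : α → Prop) (l : List α) : pcount P l ≤ l.length :=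
  countP_le_length

theorem pcount_pos {P : α → Prop} {l : List α} : 0 < pcount P l ↔ ∃ x ∈ l, P x := by
  simp [pcount, countP_pos_iff]

theorem pcount_eq_zero {P : α → Prop} {l : List α} : pcount P l = 0 ↔ ∀ x ∈ l, ¬ P x := by
  simp [pcount, countP_eq_zero]

theorem pcount_eq_length {P : α → Prop} {l : List α} : pcount P l = l.length ↔ ∀ x ∈ l, P x := by
  simp [pcount, countP_eq_length]

theorem pcount_filter (P Q : α → Prop) [DecidablePred Q] (l : List α) :
    pcount P (l.filter fun x => decide (Q x)) = pcount (fun x => P x ∧ Q x) l := by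
  simp [pcount, countP_filter]

theorem pcount_append (P : α → Prop) (l₁ l₂ : List α) :
    pcount P (l₁ ++ l₂) = pcount P l₁ + pcount P l₂ := by
  simp [pcount]

theorem pcount_eq_add_pcount_and (P Q : α → Prop) (l : List α) :
    pcount P l = pcount (fun x => P x ∧ ¬ Q x) l + pcount (fun x => P x ∧ Q x) l := by
  induction l with
  | nil => rfl
  | cons x l ih =>
    simp only [pcount_cons, ih]
    by_cases hP : P x <;> by_cases hQ : Q x <;> simp [hP, hQ] <;> omega

theorem Nodup.pcount_eq_le_one {l : List α} (hl : l.Nodup) (a : α) : pcount (· = a) l ≤ 1 := by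
  induction l with
  | nil => simp [pcount]
  | cons x l ih =>
    rw [nodup_cons] at hl
    rw [pcount_cons]
    split_ifs with hx
    · subst hx
      rw [pcount_eq_zero.2 fun y hy (h : y = x) => hl.1 (h ▸ hy)]
    · simpa using ih hl.2

theorem pcount_and_mem_eq_sum {K : Type*} (key : α → K) (s : Finset K) (Q : α → Prop)
    (l : List α) :
    pcount (fun x => key x ∈ s ∧ Q x) l = ∑ k ∈ s, pcount (fun x => key x = k ∧ Q x) l := by
  induction l with
  | nil => simp [pcount]
  | cons x l ih =>
    simp only [pcount_cons, ih, sum_add_distrib]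
    by_cases hQ : Q x <;> simp [hQ]

theorem pcount_comp_eq_sum {K : Type*} [Fintype K] (key : α → K) (g : K → Prop) (l : List α) :
    pcount (fun x => g (key x)) l = ∑ k, if g k then pcount (key · = k) l else 0 := by
  calc pcount (fun x => g (key x)) l = pcount (fun x => key x ∈ univ.filter g ∧ True) l :=
        pcount_congr (by simp)
    _ = ∑ k ∈ univ.filter g, pcount (fun x => key x = k ∧ True) l := pcount_and_mem_eq_sum ..
    _ = _ := by simp [sum_filter]

theorem exists_sublist_pcount_eq {K : Type*} (key : α → K) (l : List α) (t : K → ℕ)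
    (ht : ∀ k, t k ≤ pcount (fun x => key x = k) l) :
    ∃ l' : List α, l'.Sublist l ∧ ∀ k, pcount (fun x => key x = k) l' = t k := by
  induction l generalizing t with
  | nil =>
    refine ⟨[], Sublist.refl _, fun k => ?_⟩
    have := ht k
    simp only [pcount, countP_nil, Nat.le_zero] at this ⊢
    exact this.symm
  | cons x l ih =>
    by_cases h0 : t (key x) = 0
    · obtain ⟨l', hl', hcount⟩ := ih t fun k => by
        have := ht k
        rw [pcount_cons] at this
        split_ifs at this with hk
        · subst hk; omega
        · simpa using this
      exact ⟨l', hl'.cons x, hcount⟩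
    · set t' := Function.update t (key x) (t (key x) - 1)
      obtain ⟨l', hl', hcount⟩ := ih t' fun k => by
        have := ht k
        rw [pcount_cons] at this
        by_cases hk : key x = k
        · subst hk; simp only [if_true] at this; simp only [t', Function.update_self]; omega
        · simpa [t', Function.update_of_ne (Ne.symm hk), hk] using this
      refine ⟨x :: l', hl'.cons_cons x, fun k => ?_⟩
      rw [pcount_cons, hcount]
      by_cases hk : key x = k
      · subst hk; simp only [t', Function.update_self, if_true]; omega
      · simp [t', Function.update_of_ne (Ne.symm hk), hk]

end List

/-! ### Unit-weighted sums -/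

section WeightedSums

variable {R S : Type*}

def weightedSums [Semiring R] (A : Set R) (T : List R) : Set R :=
  {s | ∃ w : List R, w.length = T.length ∧ (∀ a ∈ w, a ∈ A) ∧ (List.zipWith (· * ·) w T).sum = s}

theorem isWZSum_iff {n : ℕ} (A : Set (ZMod n)) (T : List (ZMod n)) :
    IsWZSum A T ↔ 0 ∈ weightedSums A T :=
  Iff.rfl

variable [Semiring R] {A : Set R}

@[simp]
theorem mem_weightedSums_nil {s : R} : s ∈ weightedSums A [] ↔ s = 0 := by
  simp [weightedSums, eq_comm]

theorem mem_weightedSums_cons {x s : R} {T : List R} :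
    s ∈ weightedSums A (x :: T) ↔ ∃ a ∈ A, ∃ t ∈ weightedSums A T, s = a * x + t := by
  constructor
  · rintro ⟨_ | ⟨a, w⟩, hlen, hw, rfl⟩
    · simp at hlen
    · exact ⟨a, hw a (by simp), _, ⟨w, by simpa using hlen, fun b hb => hw b (by simp [hb]), rfl⟩,
        by simp⟩
  · rintro ⟨a, ha, t, ⟨w, hlen, hw, rfl⟩, rfl⟩
    refine ⟨a :: w, by simpa using hlen, ?_, by simp⟩
    rintro b (_ | ⟨_, hb⟩)
    exacts [ha, hw b hb]

theorem sum_mem_weightedSums (h1 : (1 : R) ∈ A) (T : List R) : T.sum ∈ weightedSums A T := by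
  induction T with
  | nil => simp
  | cons x T ih => exact mem_weightedSums_cons.2 ⟨1, h1, _, ih, by simp⟩

theorem eq_zero_of_mem_weightedSums {T : List R} (hT : ∀ x ∈ T, x = 0) {s : R}
    (hs : s ∈ weightedSums A T) : s = 0 := by
  induction T generalizing s with
  | nil => simpa using hs
  | cons x T ih =>
    obtain ⟨a, -, t, ht, rfl⟩ := mem_weightedSums_cons.1 hs
    simp [hT x (by simp), ih (fun y hy => hT y (by simp [hy])) ht]

theorem map_mem_weightedSums [Semiring S] {B : Set S} (f : R →+* S) (hf : Set.MapsTo f A B)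
    {T : List R} {s : R} (hs : s ∈ weightedSums A T) : f s ∈ weightedSums B (T.map f) := by
  induction T generalizing s with
  | nil => simp_all
  | cons x T ih =>
    obtain ⟨a, ha, t, ht, rfl⟩ := mem_weightedSums_cons.1 hs
    exact mem_weightedSums_cons.2 ⟨f a, hf ha, _, ih ht, by simp⟩

theorem mem_weightedSums_prod [Semiring S] {T : List (R × S)} {s : R × S}
    (h₁ : s.1 ∈ weightedSums {u | IsUnit u} (T.map Prod.fst))
    (h₂ : s.2 ∈ weightedSums {u | IsUnit u} (T.map Prod.snd)) :
    s ∈ weightedSums {u | IsUnit u} T := by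
  induction T generalizing s with
  | nil => simp_all [Prod.ext_iff]
  | cons x T ih =>
    obtain ⟨a, ha, t, ht, h₁⟩ := mem_weightedSums_cons.1 h₁
    obtain ⟨b, hb, t', ht', h₂⟩ := mem_weightedSums_cons.1 h₂
    refine mem_weightedSums_cons.2 ⟨(a, b), Prod.isUnit_iff.2 ⟨ha, hb⟩, (t, t'),
      ih ht ht', ?_⟩
    ext <;> simp_all

theorem ne_zero_of_mem_weightedSums {T : List R} (hT : pcount (· ≠ 0) T = 1) {s : R}
    (hs : s ∈ weightedSums {u | IsUnit u} T) : s ≠ 0 := by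
  induction T generalizing s with
  | nil => simp [pcount] at hT
  | cons x T ih =>
    obtain ⟨a, ha, t, ht, rfl⟩ := mem_weightedSums_cons.1 hs
    rw [List.pcount_cons] at hT
    by_cases hx : x = 0
    · simpa [hx] using ih (by simpa [hx] using hT) ht
    · have ht0 : t = 0 := eq_zero_of_mem_weightedSums (fun y hy => by_contra fun h =>
        (List.pcount_pos.2 ⟨y, hy, h⟩).ne' (by simpa [hx] using hT)) ht
      simpa [ht0, IsUnit.mul_right_eq_zero ha] using hx

theorem mul_mem_weightedSums_map {R : Type*} [CommSemiring R] {A : Set R} {T : List R} {s : R}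
    (c : R) (hs : s ∈ weightedSums A T) : c * s ∈ weightedSums A (T.map (c * ·)) := by
  induction T generalizing s with
  | nil => simp_all
  | cons x T ih =>
    obtain ⟨a, ha, t, ht, rfl⟩ := mem_weightedSums_cons.1 hs
    exact mem_weightedSums_cons.2 ⟨a, ha, _, ih ht, by ring⟩

theorem mem_weightedSums_of_castHom {m k : ℕ} (hmk : m.Coprime k) {T : List (ZMod (m * k))}
    {s : ZMod (m * k)}
    (h₁ : ZMod.castHom (dvd_mul_right m k) (ZMod m) s ∈
      weightedSums {u | IsUnit u} (T.map (ZMod.castHom (dvd_mul_right m k) (ZMod m))))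
    (h₂ : ZMod.castHom (dvd_mul_left k m) (ZMod k) s ∈
      weightedSums {u | IsUnit u} (T.map (ZMod.castHom (dvd_mul_left k m) (ZMod k)))) :
    s ∈ weightedSums {u | IsUnit u} T := by
  set f := (ZMod.castHom (dvd_mul_right m k) (ZMod m)).prod
    (ZMod.castHom (dvd_mul_left k m) (ZMod k))
  set g : ZMod m × ZMod k →+* ZMod (m * k) := (ZMod.chineseRemainder hmk).symm.toRingHom
  have hgf : g.comp f = RingHom.id _ := Subsingleton.elim _ _
  have hprod : f s ∈ weightedSums {u | IsUnit u} (T.map f) :=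
    mem_weightedSums_prod (by rwa [List.map_map]) (by rwa [List.map_map])
  have := map_mem_weightedSums (B := {u | IsUnit u}) g (fun u hu => IsUnit.map g hu) hprod
  rwa [List.map_map, ← RingHom.coe_comp, hgf, RingHom.coe_id, List.map_id,
    ← RingHom.comp_apply, hgf, RingHom.id_apply] at this

end WeightedSums

section Field

variable {F : Type*} [Field F]

theorem exists_isUnit_sub_mul_ne_zero (h2 : (2 : F) ≠ 0) {x s : F} (h : x ≠ 0 ∨ s ≠ 0) :
    ∃ a : F, IsUnit a ∧ s - a * x ≠ 0 := by
  by_cases hs : s - x = 0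
  · refine ⟨-1, isUnit_one.neg, ?_⟩
    have hx : x ≠ 0 := by rintro rfl; simp_all
    rw [sub_eq_zero.1 hs, neg_one_mul, sub_neg_eq_add, ← two_mul]
    exact mul_ne_zero h2 hx
  · exact ⟨1, isUnit_one, by simpa using hs⟩

theorem mem_weightedSums_of_ne_zero (h2 : (2 : F) ≠ 0) {T : List F} (hT : ∃ x ∈ T, x ≠ 0)
    {s : F} (hs : s ≠ 0) : s ∈ weightedSums {u | IsUnit u} T := by
  induction T generalizing s with
  | nil => simp at hT
  | cons x T ih =>
    by_cases hT' : ∃ y ∈ T, y ≠ 0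
    · obtain ⟨a, ha, hsa⟩ := exists_isUnit_sub_mul_ne_zero h2 (x := x) (Or.inr hs)
      exact mem_weightedSums_cons.2 ⟨a, ha, _, ih hT' hsa, by ring⟩
    · push Not at hT'
      have hx : x ≠ 0 := by
        obtain ⟨y, hy, hy0⟩ := hT
        rcases List.mem_cons.1 hy with rfl | hy
        exacts [hy0, absurd (hT' y hy) hy0]
      refine mem_weightedSums_cons.2 ⟨s / x, isUnit_iff_ne_zero.2 (div_ne_zero hs hx), T.sum,
        sum_mem_weightedSums isUnit_one T, ?_⟩
      rw [List.sum_eq_zero hT', div_mul_cancel₀ s hx, add_zero]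

theorem mem_weightedSums_of_two_le (h2 : (2 : F) ≠ 0) {T : List F} (hT : 2 ≤ pcount (· ≠ 0) T)
    (s : F) : s ∈ weightedSums {u | IsUnit u} T := by
  induction T generalizing s with
  | nil => simp [pcount] at hT
  | cons x T ih =>
    rw [List.pcount_cons] at hT
    by_cases hx : x = 0
    · rw [if_neg (not_not.2 hx), add_zero] at hT
      exact mem_weightedSums_cons.2 ⟨1, isUnit_one, s, ih hT s, by simp [hx]⟩
    · obtain ⟨a, ha, hsa⟩ := exists_isUnit_sub_mul_ne_zero h2 (s := s) (Or.inl hx)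
      rw [if_pos hx] at hT
      have hT' : ∃ y ∈ T, y ≠ 0 := List.pcount_pos.1 (by omega)
      exact mem_weightedSums_cons.2 ⟨a, ha, _, mem_weightedSums_of_ne_zero h2 hT' hsa, by ring⟩

theorem zero_mem_weightedSums_of_pcount_ne_one (h2 : (2 : F) ≠ 0) {T : List F}
    (hT : pcount (· ≠ 0) T ≠ 1) : 0 ∈ weightedSums {u | IsUnit u} T := by
  rcases Nat.lt_or_ge (pcount (· ≠ 0) T) 2 with h | h
  · have hzero : ∀ x ∈ T, x = 0 := by
      simpa using List.pcount_eq_zero.1 (show pcount (· ≠ 0) T = 0 by omega)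
    have := sum_mem_weightedSums (A := {u : F | IsUnit u}) isUnit_one T
    rwa [List.sum_eq_zero hzero] at this
  · exact mem_weightedSums_of_two_le h2 h 0

end Field

section Parity

variable {R : Type*} [CommRing R]

theorem map_eq_ite_isUnit (ψ : R →+* ZMod 2) (hψ : ∀ x, IsUnit x ↔ ψ x = 1) (x : R) :
    ψ x = if IsUnit x then 1 else 0 := by
  have : ∀ y : ZMod 2, y = 0 ∨ y = 1 := by decide
  split_ifs with hx
  · exact (hψ x).1 hx
  · exact (this _).resolve_right ((hψ x).not.1 hx)

theorem map_eq_pcount_of_mem_weightedSums (ψ : R →+* ZMod 2) (hψ : ∀ x, IsUnit x ↔ ψ x = 1)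
    {T : List R} {s : R} (hs : s ∈ weightedSums {u | IsUnit u} T) : ψ s = pcount IsUnit T := by
  induction T generalizing s with
  | nil => simp_all [pcount]
  | cons x T ih =>
    obtain ⟨a, ha, t, ht, rfl⟩ := mem_weightedSums_cons.1 hs
    rw [map_add, map_mul, (hψ a).1 ha, one_mul, ih ht, List.pcount_cons, map_eq_ite_isUnit ψ hψ]
    split_ifs <;> simp [add_comm]

theorem mem_weightedSums_of_map_eq (ψ : R →+* ZMod 2) (hψ : ∀ x, IsUnit x ↔ ψ x = 1)
    {T : List R} (hT : ∃ u ∈ T, IsUnit u) {s : R} (hs : ψ s = pcount IsUnit T) :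
    s ∈ weightedSums {u | IsUnit u} T := by
  induction T generalizing s with
  | nil => simp at hT
  | cons x T ih =>
    rw [List.pcount_cons, Nat.cast_add] at hs
    by_cases hT' : ∃ u ∈ T, IsUnit u
    · refine mem_weightedSums_cons.2 ⟨1, isUnit_one, s - x, ih hT' ?_, by ring⟩
      rw [map_sub, hs, map_eq_ite_isUnit ψ hψ]
      split_ifs <;> simp
    · have hsum := map_eq_pcount_of_mem_weightedSums ψ hψ (sum_mem_weightedSums isUnit_one T)
      have h0 : pcount IsUnit T = 0 := List.pcount_eq_zero.2 (by simpa using hT')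
      obtain ⟨u, rfl⟩ : IsUnit x := by simpa [hT'] using hT
      -- the weight of the unit `u` is forced, and it is a unit since `s - T.sum` is odd
      refine mem_weightedSums_cons.2 ⟨(s - T.sum) * ↑u⁻¹, ?_, T.sum,
        sum_mem_weightedSums isUnit_one T, by rw [mul_assoc, u.inv_mul, mul_one, sub_add_cancel]⟩
      refine ((hψ _).2 ?_).mul u⁻¹.isUnit
      rw [map_sub, hs, hsum, h0]
      simp

end Parity

theorem isUnit_natCast_iff_odd {r : ℕ} (hr : r ≠ 0) (q : ℕ) :
    IsUnit (q : ZMod (2 ^ r)) ↔ Odd q := by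
  rw [ZMod.isUnit_iff_coprime, Nat.coprime_pow_right_iff (Nat.pos_of_ne_zero hr),
    Nat.coprime_two_right]

theorem isUnit_iff_castHom_eq_one {r : ℕ} (hr : r ≠ 0) (y : ZMod (2 ^ r)) :
    IsUnit y ↔ ZMod.castHom (dvd_pow_self 2 hr) (ZMod 2) y = 1 := by
  have : NeZero (2 ^ r) := ⟨by positivity⟩
  rw [← ZMod.natCast_zmod_val y, map_natCast, ZMod.natCast_eq_one_iff_odd,
    isUnit_natCast_iff_odd hr]

theorem castHom_apply_eq_val {n d : ℕ} [NeZero n] (hd : d ∣ n) (x : ZMod n) :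
    ZMod.castHom hd (ZMod d) x = (x.val : ZMod d) := by
  rw [ZMod.castHom_apply, ZMod.cast_eq_val]

/-! ### The `2`-adic class of a residue -/

/-- `min (v₂ x.val) r`, where `v₂ 0 = ∞`: the class `r` collects the multiples of `2 ^ r`,
including `0`. -/
def twoAdicVal (r : ℕ) {n : ℕ} (x : ZMod n) : ℕ :=
  padicValNat 2 (x.val.gcd (2 ^ r))

section TwoAdicVal

variable {r n : ℕ} {x : ZMod n}

theorem le_twoAdicVal_iff {i : ℕ} (hi : i ≤ r) : i ≤ twoAdicVal r x ↔ 2 ^ i ∣ x.val := by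
  have : Fact (Nat.Prime 2) := ⟨Nat.prime_two⟩
  rw [twoAdicVal, ← padicValNat_dvd_iff_le (Nat.gcd_ne_zero_right (by positivity)),
    Nat.dvd_gcd_iff, and_iff_left (pow_dvd_pow 2 hi)]

theorem twoAdicVal_le : twoAdicVal r x ≤ r := by
  have : Fact (Nat.Prime 2) := ⟨Nat.prime_two⟩
  by_contra! h
  have := (padicValNat_dvd_iff_le (Nat.gcd_ne_zero_right (by positivity))).2 h
  exact absurd (this.trans (Nat.gcd_dvd_right _ _)) (by
    rw [Nat.pow_dvd_pow_iff_le_right (by norm_num)]; omega)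

theorem twoAdicVal_eq_iff {i : ℕ} (hi : i < r) :
    twoAdicVal r x = i ↔ 2 ^ i ∣ x.val ∧ ¬ 2 ^ (i + 1) ∣ x.val := by
  rw [← le_twoAdicVal_iff hi.le, ← le_twoAdicVal_iff hi]
  omega

theorem twoAdicVal_zero : twoAdicVal r (0 : ZMod n) = r :=
  le_antisymm twoAdicVal_le ((le_twoAdicVal_iff le_rfl).2 (by simp))

theorem twoAdicVal_two_pow {i : ℕ} (hi : i ≤ r) (hn : 2 ^ i < n) :
    twoAdicVal r ((2 ^ i : ℕ) : ZMod n) = i := by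
  have hval : ((2 ^ i : ℕ) : ZMod n).val = 2 ^ i := ZMod.val_natCast_of_lt hn
  refine le_antisymm ?_ ((le_twoAdicVal_iff hi).2 (by rw [hval]))
  rcases hi.lt_or_eq with hi | rfl
  · by_contra! h
    have := (le_twoAdicVal_iff hi).1 h
    rw [hval, Nat.pow_dvd_pow_iff_le_right (by norm_num)] at this
    omega
  · exact twoAdicVal_le

theorem isOddMultiple_iff [NeZero n] {i : ℕ} (hn : 2 ^ r ∣ n) (hi : i < r) :
    IsOddMultiple n i x ↔ twoAdicVal r x = i := by
  rw [twoAdicVal_eq_iff hi]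
  constructor
  · rintro ⟨u, hu, hx⟩
    have hdvd : (2 ^ (i + 1) : ℤ) ∣ 2 ^ i * u - x.val := by
      refine (Int.natCast_dvd_natCast.2 ((pow_dvd_pow 2 hi).trans hn)).trans ?_
      rw [← ZMod.intCast_eq_intCast_iff_dvd_sub]
      push_cast
      rw [ZMod.natCast_zmod_val, hx]
    have h2i : (2 ^ i : ℤ) ∣ x.val :=
      (dvd_sub_right (dvd_mul_right _ _)).1 ((pow_dvd_pow 2 i.le_succ).trans hdvd)
    refine ⟨Int.natCast_dvd_natCast.1 (by exact_mod_cast h2i), fun h => ?_⟩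
    have : (2 ^ (i + 1) : ℤ) ∣ 2 ^ i * u := by
      simpa using dvd_add hdvd (Int.natCast_dvd_natCast.2 h)
    rw [pow_succ, mul_dvd_mul_iff_left (by positivity)] at this
    exact (Int.not_even_iff_odd.2 hu) (even_iff_two_dvd.2 this)
  · rintro ⟨⟨q, hq⟩, h⟩
    have hodd : Odd q := by
      rw [Nat.odd_iff, ← Nat.two_dvd_ne_zero]
      rintro ⟨t, rfl⟩
      exact h ⟨t, by rw [hq, pow_succ]; ring⟩
    refine ⟨q, by exact_mod_cast hodd, ?_⟩
    rw [← ZMod.natCast_zmod_val x, hq]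
    push_cast
    rfl

theorem pcount_lt_twoAdicVal_and_eq_sum (S : List (ZMod n)) (Q : ZMod n → Prop) (j : ℕ) :
    pcount (fun x => j < twoAdicVal r x ∧ Q x) S =
      ∑ i ∈ Ioc j r, pcount (fun x => twoAdicVal r x = i ∧ Q x) S := by
  rw [← List.pcount_and_mem_eq_sum]
  exact List.pcount_congr fun x _ => by simp [twoAdicVal_le]

theorem length_eq_sum_pcount_twoAdicVal (S : List (ZMod n)) (Q : ZMod n → Prop) :
    S.length = ∑ i ∈ range (r + 1), (pcount (fun x => twoAdicVal r x = i ∧ ¬ Q x) S +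
      pcount (fun x => twoAdicVal r x = i ∧ Q x) S) := by
  rw [← (List.pcount_eq_length (P := fun x => twoAdicVal r x ∈ range (r + 1) ∧ True)).2
    fun x _ => ⟨mem_range.2 (Nat.lt_succ_of_le twoAdicVal_le), trivial⟩,
    List.pcount_and_mem_eq_sum]
  refine sum_congr rfl fun i _ => ?_
  rw [List.pcount_eq_add_pcount_and _ Q]
  simp only [and_true]

end TwoAdicVal

/-! ### Zero-sum subsequences of length `2 ^ r * p` -/

theorem zero_mem_weightedSums_of_even_pcount_isUnit {r : ℕ} (hr : r ≠ 0) {Z : List (ZMod (2 ^ r))}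
    (heven : Even (pcount IsUnit Z)) (hpos : 0 < pcount IsUnit Z) :
    0 ∈ weightedSums {u | IsUnit u} Z :=
  mem_weightedSums_of_map_eq _ (isUnit_iff_castHom_eq_one hr) (List.pcount_pos.1 hpos)
    (by rw [map_zero, ZMod.natCast_eq_zero_iff_even.2 heven])

theorem zero_mem_weightedSums_map_castHom_two_pow {r n j : ℕ} [NeZero n] (hn : 2 ^ r ∣ n)
    {T : List (ZMod n)} (hj : j ≤ r) (hT : ∀ x ∈ T, j ≤ twoAdicVal r x)
    (heven : Even (pcount (twoAdicVal r · = j) T)) (hpos : 0 < pcount (twoAdicVal r · = j) T) :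
    0 ∈ weightedSums {u | IsUnit u} (T.map (ZMod.castHom hn (ZMod (2 ^ r)))) := by
  rcases hj.lt_or_eq with hj | hj
  · set q : ZMod n → ZMod (2 ^ r) := fun x => ((x.val / 2 ^ j : ℕ) : ZMod (2 ^ r))
    have hmap : T.map (ZMod.castHom hn (ZMod (2 ^ r))) = (T.map q).map (2 ^ j * ·) := by
      rw [List.map_map]
      refine List.map_congr_left fun x hx => ?_
      rw [castHom_apply_eq_val, Function.comp_apply,
        ← Nat.mul_div_cancel' ((le_twoAdicVal_iff hj.le).1 (hT x hx))]
      push_cast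
      rfl
    have hcount : pcount IsUnit (T.map q) = pcount (twoAdicVal r · = j) T := by
      refine (List.pcount_map _ _ _).trans (List.pcount_congr fun x hx => ?_)
      obtain ⟨c, hc⟩ := (le_twoAdicVal_iff hj.le).1 (hT x hx)
      rw [Function.comp_apply, isUnit_natCast_iff_odd (by omega), twoAdicVal_eq_iff hj, hc,
        Nat.mul_div_cancel_left _ (by positivity), pow_succ,
        Nat.mul_dvd_mul_iff_left (by positivity)]
      simp [Nat.odd_iff, Nat.two_dvd_ne_zero]
    rw [hmap, ← mul_zero ((2 : ZMod (2 ^ r)) ^ j)]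
    exact mul_mem_weightedSums_map _ (zero_mem_weightedSums_of_even_pcount_isUnit (by omega)
      (hcount ▸ heven) (hcount ▸ hpos))
  · have hzero : ∀ y ∈ T.map (ZMod.castHom hn (ZMod (2 ^ r))), y = 0 := by
      simp only [List.mem_map]
      rintro _ ⟨x, hx, rfl⟩
      rw [castHom_apply_eq_val, ZMod.natCast_eq_zero_iff]
      exact (le_twoAdicVal_iff le_rfl).1 (hj ▸ hT x hx)
    have := sum_mem_weightedSums (A := {u | IsUnit u}) isUnit_one
      (T.map (ZMod.castHom hn (ZMod (2 ^ r))))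
    rwa [List.sum_eq_zero hzero] at this

theorem isWZSum_of_twoAdicVal {r p j : ℕ} (hp : p.Prime) (hp2 : p ≠ 2)
    {T : List (ZMod (2 ^ r * p))} (hj : j ≤ r) (hT : ∀ x ∈ T, j ≤ twoAdicVal r x)
    (heven : Even (pcount (twoAdicVal r · = j) T)) (hpos : 0 < pcount (twoAdicVal r · = j) T)
    (hp1 : pcount (fun x => ¬ p ∣ x.val) T ≠ 1) :
    IsWZSum (U (2 ^ r * p)) T := by
  have : Fact p.Prime := ⟨hp⟩
  have : NeZero (2 ^ r * p) := ⟨mul_ne_zero (by positivity) hp.ne_zero⟩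
  have hcop : (2 ^ r).Coprime p :=
    Nat.Coprime.pow_left _ ((Nat.coprime_primes Nat.prime_two hp).2 (Ne.symm hp2))
  refine (isWZSum_iff _ _).2 (mem_weightedSums_of_castHom hcop ?_ ?_) <;> rw [map_zero]
  · exact zero_mem_weightedSums_map_castHom_two_pow _ hj hT heven hpos
  · refine zero_mem_weightedSums_of_pcount_ne_one
      (Ring.two_ne_zero (by rwa [ZMod.ringChar_zmod_n])) ?_
    rwa [List.pcount_map, List.pcount_congr fun x _ => by
      rw [Function.comp_apply, castHom_apply_eq_val, Ne, ZMod.natCast_eq_zero_iff]]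

theorem not_isWZSum_of_pcount_ne_zero_eq_one {n : ℕ} {R : Type*} [Semiring R] (f : ZMod n →+* R)
    {T : List (ZMod n)} (hT : pcount (fun x => f x ≠ 0) T = 1) : ¬ IsWZSum (U n) T := fun h =>
  ne_zero_of_mem_weightedSums (by rwa [List.pcount_map])
    (map_mem_weightedSums (B := {u | IsUnit u}) f (fun _ hu => IsUnit.map f hu)
      ((isWZSum_iff _ _).1 h)) (map_zero f)

theorem not_isWZSum_of_pcount_twoAdicVal_eq_one {r n m : ℕ} [NeZero n] (hn : 2 ^ r ∣ n)
    (hm : m < r) {T : List (ZMod n)} (hT : ∀ x ∈ T, m ≤ twoAdicVal r x)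
    (h1 : pcount (twoAdicVal r · = m) T = 1) : ¬ IsWZSum (U n) T :=
  not_isWZSum_of_pcount_ne_zero_eq_one
    (ZMod.castHom ((pow_dvd_pow 2 hm).trans hn) (ZMod (2 ^ (m + 1)))) <| by
    -- modulo `2 ^ (m + 1)` only the term of class `m` survives
    refine (List.pcount_congr fun x hx => ?_).trans h1
    rw [castHom_apply_eq_val, Ne, ZMod.natCast_eq_zero_iff, ← le_twoAdicVal_iff hm]
    have := hT x hx
    omega

theorem not_hasWZSS_of_pcount_le_one {r p : ℕ} (hp : p.Prime) {S : List (ZMod (2 ^ r * p))}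
    (hlow : ∀ i < r, pcount (twoAdicVal r · = i) S ≤ 1)
    (htop : pcount (fun x => twoAdicVal r x = r ∧ ¬ p ∣ x.val) S ≤ 1)
    (hzero : pcount (fun x => twoAdicVal r x = r ∧ p ∣ x.val) S < 2 ^ r * p) :
    ¬ HasWZSS (U (2 ^ r * p)) S (2 ^ r * p) := by
  have : NeZero (2 ^ r * p) := ⟨mul_ne_zero (by positivity) hp.ne_zero⟩
  rintro ⟨-, T, hTS, hlen, hT⟩
  by_cases hex : ∃ x ∈ T, twoAdicVal r x < r
  · have hval : ∃ i, ∃ x ∈ T, twoAdicVal r x = i := by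
      obtain ⟨x, hx, -⟩ := hex
      exact ⟨_, x, hx, rfl⟩
    obtain ⟨x, hx, hxm⟩ := Nat.find_spec hval
    have hmin : ∀ y ∈ T, Nat.find hval ≤ twoAdicVal r y :=
      fun y hy => Nat.find_min' hval ⟨y, hy, rfl⟩
    have hmr : Nat.find hval < r := by
      obtain ⟨y, hy, hyr⟩ := hex
      exact (hmin y hy).trans_lt hyr
    refine not_isWZSum_of_pcount_twoAdicVal_eq_one (dvd_mul_right _ _) hmr hmin ?_ hT
    have := (hTS.pcount_le _).trans (hlow _ hmr)
    have := (List.pcount_pos (P := (twoAdicVal r · = Nat.find hval))).2 ⟨x, hx, hxm⟩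
    omega
  · push Not at hex
    have htopT : ∀ x ∈ T, twoAdicVal r x = r := fun x hx => le_antisymm twoAdicVal_le (hex x hx)
    have hT1 : pcount (fun x => ¬ p ∣ x.val) T ≤ 1 := by
      refine le_trans (le_of_eq (List.pcount_congr fun x hx => ?_)) ((hTS.pcount_le _).trans htop)
      simp [htopT x hx]
    rcases Nat.le_one_iff_eq_zero_or_eq_one.1 hT1 with h0 | h1
    · have hall : pcount (fun x => twoAdicVal r x = r ∧ p ∣ x.val) T = T.length :=
        List.pcount_eq_length.2 fun x hx =>
          ⟨htopT x hx, not_not.1 (List.pcount_eq_zero.1 h0 x hx)⟩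
      have := hTS.pcount_le (fun x => twoAdicVal r x = r ∧ p ∣ x.val)
      omega
    · refine not_isWZSum_of_pcount_ne_zero_eq_one
        (ZMod.castHom (dvd_mul_left p (2 ^ r)) (ZMod p)) ?_ hT
      exact (List.pcount_congr fun x _ => by
        rw [castHom_apply_eq_val, Ne, ZMod.natCast_eq_zero_iff]).trans h1

def zerosAndPowersOfTwo (r p : ℕ) : List (ZMod (2 ^ r * p)) :=
  List.replicate (2 ^ r * p - 1) 0 ++ (List.range (r + 1)).map fun i => ((2 ^ i : ℕ) : ZMod _)

theorem not_hasWZSS_of_sublist_zerosAndPowersOfTwo {r p : ℕ} (hp : p.Prime) (hp2 : p ≠ 2)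
    {T : List (ZMod (2 ^ r * p))} (hT : T.Sublist (zerosAndPowersOfTwo r p)) :
    ¬ HasWZSS (U (2 ^ r * p)) T (2 ^ r * p) := by
  have hlt : ∀ i ∈ List.range (r + 1), 2 ^ i < 2 ^ r * p := fun i hi =>
    (Nat.pow_lt_pow_right (by norm_num) (List.mem_range.1 hi)).trans_le
      (by rw [pow_succ]; exact Nat.mul_le_mul_left _ (hp.two_le))
  have hpow : ∀ i ∈ List.range (r + 1), twoAdicVal r ((2 ^ i : ℕ) : ZMod (2 ^ r * p)) = i ∧
      ¬ p ∣ ((2 ^ i : ℕ) : ZMod (2 ^ r * p)).val := fun i hi => by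
    refine ⟨twoAdicVal_two_pow (Nat.lt_succ_iff.1 (List.mem_range.1 hi)) (hlt i hi), ?_⟩
    rw [ZMod.val_natCast_of_lt (hlt i hi)]
    exact fun h => hp2 ((Nat.prime_dvd_prime_iff_eq hp Nat.prime_two).1 (hp.dvd_of_dvd_pow h))
  refine not_hasWZSS_of_pcount_le_one hp (fun i hi => (hT.pcount_le _).trans ?_)
    ((hT.pcount_le _).trans ?_) ((hT.pcount_le _).trans_lt ?_) <;>
    simp only [zerosAndPowersOfTwo, List.pcount_append, List.pcount_map]
  · rw [List.pcount_eq_zero.2 fun x hx => by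
      rw [List.eq_of_mem_replicate hx, twoAdicVal_zero]; omega, zero_add]
    refine (List.pcount_congr fun k hk => ?_).trans_le (List.nodup_range.pcount_eq_le_one i)
    rw [Function.comp_apply, (hpow k hk).1]
  · rw [List.pcount_eq_zero.2 fun x hx => by simp [List.eq_of_mem_replicate hx], zero_add]
    refine (List.pcount_congr fun k hk => ?_).trans_le (List.nodup_range.pcount_eq_le_one r)
    rw [Function.comp_apply, (hpow k hk).1, and_iff_left (hpow k hk).2]
  · rw [(List.pcount_eq_zero (l := List.range (r + 1))).2 fun k hk h => (hpow k hk).2 h.2]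
    have := List.pcount_le_length (fun x => twoAdicVal r x = r ∧ p ∣ x.val)
      (List.replicate (2 ^ r * p - 1) (0 : ZMod (2 ^ r * p)))
    have : 0 < 2 ^ r * p := Nat.mul_pos (by positivity) hp.pos
    simp only [List.length_replicate] at *
    omega

/-! ### The counting argument -/

/-- The numbers `α, β` of terms taken from class `j` and `α', β'` of terms taken from the classes
above `j` (`α, α'` of them prime to `p`, out of `a, A` available; `β, β'` divisible by `p`, out of
`b, B`) meet the zero-sum criterion `isWZSum_of_twoAdicVal` for a subsequence of length `n`. -/
def BlockFeasible (n a b A B : ℕ) : Prop :=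
  ∃ α β α' β', α ≤ a ∧ β ≤ b ∧ α' ≤ A ∧ β' ≤ B ∧ Even (α + β) ∧ 0 < α + β ∧
    α + β + α' + β' = n ∧ α + α' ≠ 1

theorem hasWZSS_of_blockFeasible {r p j : ℕ} (hp : p.Prime) (hp2 : p ≠ 2)
    {S : List (ZMod (2 ^ r * p))} (hj : j ≤ r)
    (h : BlockFeasible (2 ^ r * p) (pcount (fun x => twoAdicVal r x = j ∧ ¬ p ∣ x.val) S)
      (pcount (fun x => twoAdicVal r x = j ∧ p ∣ x.val) S)
      (pcount (fun x => j < twoAdicVal r x ∧ ¬ p ∣ x.val) S)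
      (pcount (fun x => j < twoAdicVal r x ∧ p ∣ x.val) S)) :
    HasWZSS (U (2 ^ r * p)) S (2 ^ r * p) := by
  obtain ⟨α, β, α', β', hα, hβ, hα', hβ', heven, hpos, hsum, hne⟩ := h
  let key : ZMod (2 ^ r * p) → Bool × Bool :=
    fun x => (decide (twoAdicVal r x = j), decide (¬ p ∣ x.val))
  let t : Bool × Bool → ℕ := fun k =>
    if k.1 then (if k.2 then α else β) else (if k.2 then α' else β')
  have ht : ∀ k, t k ≤ pcount (key · = k) (S.filter fun x => decide (j ≤ twoAdicVal r x)) := by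
    rintro ⟨_ | _, _ | _⟩ <;> rw [List.pcount_filter] <;>
      [refine hβ'.trans_eq ?_; refine hα'.trans_eq ?_; refine hβ.trans_eq ?_;
        refine hα.trans_eq ?_] <;>
      exact List.pcount_congr fun x _ => by
        simp only [key, Prod.mk.injEq, decide_eq_true_eq, decide_eq_false_iff_not]; grind
  obtain ⟨T, hTS, hT⟩ := List.exists_sublist_pcount_eq key _ t ht
  have hcount (g : Bool × Bool → Prop) :
      pcount (fun x => g (key x)) T = ∑ k, if g k then t k else 0 := by
    simp only [List.pcount_comp_eq_sum, hT]
  have hlen := hcount fun _ => True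
  have hj' := hcount fun k => k.1 = true
  have hp' := hcount fun k => k.2 = true
  simp only [List.pcount_eq_length.2 (fun _ _ => trivial), key, t, decide_eq_true_eq,
    Fintype.sum_prod_type, Fintype.sum_bool, Bool.false_eq_true, ↓reduceIte] at hlen hj' hp'
  refine ⟨Nat.mul_pos (by positivity) hp.pos, T, hTS.trans List.filter_sublist, by omega,
    isWZSum_of_twoAdicVal hp hp2 hj (fun x hx => ?_) ?_ ?_ ?_⟩
  · simpa using (List.mem_filter.1 (hTS.subset hx)).2
  · rwa [hj']
  · omega
  · omega

/- With `τ` terms from class `j`, the number of terms prime to `p` can be anything between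
`(τ - b) + (n - τ - B)` and `min τ a + min (n - τ) A` (truncated subtraction intended). -/
theorem blockFeasible_of_interval {n a b A B τ : ℕ} (hτ : Even τ) (hτ0 : 0 < τ)
    (hτc : τ ≤ a + b) (hτn : τ ≤ n) (hfill : n - τ ≤ A + B)
    (h : ¬((τ - b) + (n - τ - B) = 1 ∧ min τ a + min (n - τ) A = 1)) :
    BlockFeasible n a b A B := by
  -- aim at `k ≠ 1` terms prime to `p`, `α` of them from class `j`
  set k := if (τ - b) + (n - τ - B) = 1 then 2 else (τ - b) + (n - τ - B)
  have hk : (τ - b) + (n - τ - B) ≤ k ∧ k ≤ min τ a + min (n - τ) A ∧ k ≠ 1 := by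
    simp only [k]; split_ifs <;> omega
  set α := min (min τ a) (max (τ - b) (k - min (n - τ) A))
  refine ⟨α, τ - α, k - α, n - τ - (k - α), ?_, ?_, ?_, ?_, ?_, ?_, ?_, ?_⟩ <;>
    first | omega | (rw [show α + (τ - α) = τ by omega]; exact hτ)

theorem blockFeasible_of_add_two_le {n a b A B : ℕ} (hn : Even n) (hn4 : 4 ≤ n)
    (hab : 2 ≤ a + b) (hs : n + 2 ≤ a + b + A + B) (hdeg : ¬(a = 1 ∧ b = 1 ∧ A = 0)) :
    BlockFeasible n a b A B := by
  rw [Nat.even_iff] at hn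
  -- take as many terms of class `j` as parity allows; if that forces exactly one term prime
  -- to `p`, two terms fewer do not
  set τ := min (2 * ((a + b) / 2)) n
  by_cases h : (τ - b) + (n - τ - B) = 1 ∧ min τ a + min (n - τ) A = 1
  · exact blockFeasible_of_interval (τ := τ - 2) (Nat.even_iff.2 (by omega)) (by omega)
      (by omega) (by omega) (by omega) (by omega)
  · exact blockFeasible_of_interval (Nat.even_iff.2 (by omega)) (by omega) (by omega)
      (by omega) (by omega) h

theorem blockFeasible_zero_zero {n b B : ℕ} (hn : Even n) (hn0 : 0 < n) (hb : 2 ≤ b)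
    (hs : n + 1 ≤ b + B) : BlockFeasible n 0 b 0 B := by
  rw [Nat.even_iff] at hn
  exact blockFeasible_of_interval (τ := min (2 * (b / 2)) n) (Nat.even_iff.2 (by omega))
    (by omega) (by omega) (by omega) (by omega) (by omega)

theorem blockFeasible_of_le_add {n a b : ℕ} (hn : Even n) (hn0 : 0 < n) (hs : n ≤ a + b)
    (ha : a = 0 ∨ n + 1 ≤ a + b) : BlockFeasible n a b 0 0 := by
  have := Nat.even_iff.1 hn
  exact blockFeasible_of_interval hn hn0 hs le_rfl (by omega) (by omega)

theorem sum_range_succ_add_eq {j r : ℕ} (a b : ℕ → ℕ) (hj : j ≤ r) :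
    ∑ i ∈ range (r + 1), (a i + b i) =
      ∑ i ∈ range j, (a i + b i) + (a j + b j) + (∑ i ∈ Ioc j r, a i + ∑ i ∈ Ioc j r, b i) := by
  rw [← sum_range_add_sum_Ico _ (by omega : j ≤ r + 1), sum_eq_sum_Ico_succ_bot (by omega),
    Ico_add_one_add_one_eq_Ioc, sum_add_distrib (s := Ioc j r)]
  omega

theorem sum_range_ite_eq (m k : ℕ) (hm : m < k) :
    ∑ i ∈ range k, (if i = m then 2 else 1) = k + 1 := by
  have : ∀ i, (if i = m then 2 else 1) = 1 + if i = m then 1 else 0 := by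
    intro i; split_ifs <;> rfl
  simp only [this, sum_add_distrib, sum_ite_eq', mem_range, hm, if_true, sum_const, card_range,
    smul_eq_mul, mul_one]

/-- Read `a j` and `b j` as the numbers of terms of class `j` prime to `p` and divisible by `p`
in a sequence without zero-sum subsequence of length `n` (see `hasWZSS_of_blockFeasible`). -/
def NoFeasibleBlock (n r : ℕ) (a b : ℕ → ℕ) : Prop :=
  ∀ j ≤ r, ¬ BlockFeasible n (a j) (b j) (∑ i ∈ Ioc j r, a i) (∑ i ∈ Ioc j r, b i)

namespace NoFeasibleBlock

variable {n k : ℕ} {a b : ℕ → ℕ}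

theorem top_two_le (hB : NoFeasibleBlock n (k + 2) a b) (hn : Even n) (hn4 : 4 ≤ n) :
    a (k + 1) + b (k + 1) + (a (k + 2) + b (k + 2)) ≤ n + 1 := by
  have hB1 := hB (k + 1) (by omega)
  have hB2 := hB (k + 2) le_rfl
  simp only [Nat.Ioc_succ_singleton, show k + 1 + 1 = k + 2 from rfl, sum_singleton, Ioc_self,
    sum_empty] at hB1 hB2
  by_contra! h
  by_cases h2 : 2 ≤ a (k + 1) + b (k + 1)
  · by_cases hdeg : a (k + 1) = 1 ∧ b (k + 1) = 1 ∧ a (k + 2) = 0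
    · exact hB2 (blockFeasible_of_le_add hn (by omega) (by omega) (Or.inl hdeg.2.2))
    · exact hB1 (blockFeasible_of_add_two_le hn hn4 h2 (by omega) hdeg)
  · exact hB2 (blockFeasible_of_le_add hn (by omega) (by omega) (Or.inr (by omega)))

theorem top_two_le_of_eq_zero (hB : NoFeasibleBlock n (k + 2) a b) (hn : Even n) (hn4 : 4 ≤ n)
    (ha₁ : a (k + 1) = 0) (ha₂ : a (k + 2) = 0) :
    a (k + 1) + b (k + 1) + (a (k + 2) + b (k + 2)) ≤ n := by
  have hB1 := hB (k + 1) (by omega)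
  have hB2 := hB (k + 2) le_rfl
  simp only [Nat.Ioc_succ_singleton, show k + 1 + 1 = k + 2 from rfl, sum_singleton, Ioc_self,
    sum_empty, ha₁, ha₂] at hB1 hB2
  by_contra! h
  by_cases h2 : 2 ≤ b (k + 1)
  · exact hB1 (blockFeasible_zero_zero hn (by omega) h2 (by omega))
  · exact hB2 (blockFeasible_of_le_add hn (by omega) (by omega) (Or.inl rfl))

theorem le_one_of_lt_of_le (hB : NoFeasibleBlock n (k + 2) a b) (hn : Even n) (hn4 : 4 ≤ n)
    (hL : n + k + 2 ≤ ∑ i ∈ range (k + 3), (a i + b i)) {m : ℕ} (hmk : m ≤ k)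
    (hbelow : ∀ i < m, a i + b i ≤ 1) (hcm : a m + b m = 2) (hA : ∑ i ∈ Ioc m (k + 2), a i = 0) :
    ∀ i, m < i → i ≤ k → a i + b i ≤ 1 := by
  by_contra! h
  have hi := Nat.find_spec h
  set i := Nat.find h
  have hlow : ∑ j ∈ range i, (a j + b j) ≤ i + 1 := by
    refine (sum_le_sum fun j hj => ?_).trans (sum_range_ite_eq m i hi.1).le
    have hji : j < i := mem_range.1 hj
    rcases lt_trichotomy j m with hjm | rfl | hjm
    · simpa [hjm.ne] using hbelow j hjm
    · simp [hcm]
    · have := Nat.find_min h hji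
      simp only [not_and, not_lt] at this
      simpa [hjm.ne'] using this hjm (by omega)
  have hzero : ∀ j ∈ Ioc m (k + 2), a j = 0 := sum_eq_zero_iff.1 hA
  have hai : a i = 0 := hzero i (by simp; omega)
  have hAi : ∑ j ∈ Ioc i (k + 2), a j = 0 :=
    sum_eq_zero fun j hj => hzero j (by simp at hj ⊢; omega)
  have hdec : ∑ j ∈ range (k + 3), (a j + b j) = _ :=
    sum_range_succ_add_eq a b (show i ≤ k + 2 by omega)
  rw [hAi] at hdec
  have hBi := hB i (by omega)
  rw [hai, hAi] at hBi
  exact hBi (blockFeasible_zero_zero hn (by omega) (by omega) (by omega))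

theorem eq_ite_of_two_le (hB : NoFeasibleBlock n (k + 2) a b) (hn : Even n) (hn4 : 4 ≤ n)
    (hL : n + k + 2 ≤ ∑ i ∈ range (k + 3), (a i + b i)) {m : ℕ} (hmk : m ≤ k)
    (hcm : 2 ≤ a m + b m) (hbelow : ∀ i < m, a i + b i ≤ 1) :
    ∑ i ∈ range (k + 3), (a i + b i) = n + k + 2 ∧
      ∀ i ≤ k, a i + b i = if i = m then 2 else 1 := by
  have hlow : ∑ i ∈ range m, (a i + b i) ≤ m :=
    (sum_le_sum fun i hi => hbelow i (mem_range.1 hi)).trans (by simp)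
  have hdec : ∑ j ∈ range (k + 3), (a j + b j) = _ :=
    sum_range_succ_add_eq a b (show m ≤ k + 2 by omega)
  obtain ⟨ham, hbm, hAm⟩ : a m = 1 ∧ b m = 1 ∧ ∑ i ∈ Ioc m (k + 2), a i = 0 := by
    by_contra hdeg
    exact hB m (by omega) (blockFeasible_of_add_two_le hn hn4 hcm (by omega) hdeg)
  have habove := hB.le_one_of_lt_of_le hn hn4 hL hmk hbelow (by omega) hAm
  have hzero : ∀ i ∈ Ioc m (k + 2), a i = 0 := sum_eq_zero_iff.1 hAm
  have htop := hB.top_two_le_of_eq_zero hn hn4 (hzero _ (by simp; omega))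
    (hzero _ (by simp; omega))
  have hle : ∀ i ∈ range (k + 1), a i + b i ≤ if i = m then 2 else 1 := by
    intro i hi
    rcases lt_trichotomy i m with him | rfl | him
    · simpa [him.ne] using hbelow i him
    · simp [ham, hbm]
    · simpa [him.ne'] using habove i him (by simp at hi; omega)
  have hsplit : ∑ i ∈ range (k + 3), (a i + b i) =
      ∑ i ∈ range (k + 1), (a i + b i) + (a (k + 1) + b (k + 1) + (a (k + 2) + b (k + 2))) := by
    simp only [sum_range_succ]; ring
  have hsum := sum_range_ite_eq m (k + 1) (by omega)
  have heq := (sum_eq_sum_iff_of_le hle).1 (le_antisymm (sum_le_sum hle) (by omega))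
  exact ⟨by have := sum_le_sum hle; omega, fun i hi => heq i (by simp; omega)⟩

theorem eq_one_of_le_one (hB : NoFeasibleBlock n (k + 2) a b) (hn : Even n) (hn4 : 4 ≤ n)
    (hL : n + k + 2 ≤ ∑ i ∈ range (k + 3), (a i + b i)) (hle : ∀ i ≤ k, a i + b i ≤ 1) :
    ∑ i ∈ range (k + 3), (a i + b i) = n + k + 2 ∧ ∀ i ≤ k, a i + b i = 1 := by
  have htop := hB.top_two_le hn hn4
  have hle' : ∀ i ∈ range (k + 1), a i + b i ≤ 1 := fun i hi => hle i (by simp at hi; omega)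
  have hsplit : ∑ i ∈ range (k + 3), (a i + b i) =
      ∑ i ∈ range (k + 1), (a i + b i) + (a (k + 1) + b (k + 1) + (a (k + 2) + b (k + 2))) := by
    simp only [sum_range_succ]; ring
  have hsum : ∑ i ∈ range (k + 1), (1 : ℕ) = k + 1 := by simp
  have heq := (sum_eq_sum_iff_of_le hle').1 (le_antisymm (sum_le_sum hle') (by omega))
  exact ⟨by have := sum_le_sum hle'; omega, fun i hi => heq i (by simp; omega)⟩

theorem sum_eq_and_eq_one_or_two (hB : NoFeasibleBlock n (k + 2) a b) (hn : Even n)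
    (hn4 : 4 ≤ n) (hL : n + k + 2 ≤ ∑ i ∈ range (k + 3), (a i + b i)) :
    ∑ i ∈ range (k + 3), (a i + b i) = n + k + 2 ∧
      ((∀ i ≤ k, a i + b i = 1) ∨ ∃ m ≤ k, a m + b m = 2 ∧ ∀ i ≤ k, i ≠ m → a i + b i = 1) := by
  by_cases hA : ∃ j ≤ k, 2 ≤ a j + b j
  · obtain ⟨hmk, hcm⟩ := Nat.find_spec hA
    have hbelow : ∀ i < Nat.find hA, a i + b i ≤ 1 := fun i hi => by
      have := Nat.find_min hA hi
      push Not at this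
      have := this (by omega)
      omega
    obtain ⟨hsum, heq⟩ := hB.eq_ite_of_two_le hn hn4 hL hmk hcm hbelow
    refine ⟨hsum, Or.inr ⟨_, hmk, by simpa using heq _ hmk, fun i hi him => ?_⟩⟩
    simpa [him] using heq i hi
  · push Not at hA
    obtain ⟨hsum, heq⟩ := hB.eq_one_of_le_one hn hn4 hL fun i hi => by have := hA i hi; omega
    exact ⟨hsum, Or.inl heq⟩

end NoFeasibleBlock

theorem length_eq_and_pcount_isOddMultiple_of_not_hasWZSS {r p : ℕ} (hr : 2 ≤ r) (hp : p.Prime)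
    (hp2 : p ≠ 2) {S : List (ZMod (2 ^ r * p))} (hlen : 2 ^ r * p + r ≤ S.length)
    (hno : ¬ HasWZSS (U (2 ^ r * p)) S (2 ^ r * p)) :
    S.length = 2 ^ r * p + r ∧
      ((∀ i ≤ r - 2, pcount (IsOddMultiple (2 ^ r * p) i) S = 1) ∨
        ∃ m ≤ r - 2, pcount (IsOddMultiple (2 ^ r * p) m) S = 2 ∧
          ∀ i ≤ r - 2, i ≠ m → pcount (IsOddMultiple (2 ^ r * p) i) S = 1) := by
  obtain ⟨k, rfl⟩ : ∃ k, r = k + 2 := ⟨r - 2, by omega⟩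
  have : NeZero (2 ^ (k + 2) * p) := ⟨mul_ne_zero (by positivity) hp.ne_zero⟩
  set a := fun i => pcount (fun x => twoAdicVal (k + 2) x = i ∧ ¬ p ∣ x.val) S
  set b := fun i => pcount (fun x => twoAdicVal (k + 2) x = i ∧ p ∣ x.val) S
  have hL : S.length = ∑ i ∈ range (k + 3), (a i + b i) :=
    length_eq_sum_pcount_twoAdicVal S (p ∣ ·.val)
  have hB : NoFeasibleBlock (2 ^ (k + 2) * p) (k + 2) a b := fun j hj h =>
    hno (hasWZSS_of_blockFeasible hp hp2 hj
      (by rwa [pcount_lt_twoAdicVal_and_eq_sum, pcount_lt_twoAdicVal_and_eq_sum]))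
  have hn : Even (2 ^ (k + 2) * p) := (Nat.even_pow.2 ⟨even_two, by omega⟩).mul_right p
  have hn4 : 4 ≤ 2 ^ (k + 2) * p := by
    calc 4 = 2 ^ 2 := rfl
      _ ≤ 2 ^ (k + 2) := Nat.pow_le_pow_right (by norm_num) (by omega)
      _ ≤ 2 ^ (k + 2) * p := Nat.le_mul_of_pos_right _ hp.pos
  obtain ⟨hsum, hcases⟩ := hB.sum_eq_and_eq_one_or_two hn hn4 (by rw [← hL]; omega)
  have hodd : ∀ i ≤ k, pcount (IsOddMultiple (2 ^ (k + 2) * p) i) S = a i + b i := fun i hi => by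
    rw [List.pcount_congr fun x _ => isOddMultiple_iff (dvd_mul_right _ _) (by omega),
      List.pcount_eq_add_pcount_and _ (fun x => p ∣ x.val)]
  simp only [Nat.add_sub_cancel]
  refine ⟨by omega, ?_⟩
  rcases hcases with h | ⟨m, hm, hm2, h⟩
  · exact Or.inl fun i hi => (hodd i hi).trans (h i hi)
  · exact Or.inr ⟨m, hm, (hodd m hm).trans hm2, fun i hi him => (hodd i hi).trans (h i hi him)⟩

theorem gaoC_units_eq {r p : ℕ} (hr : 2 ≤ r) (hp : p.Prime) (hp2 : p ≠ 2) :
    GaoC (2 ^ r * p) (U (2 ^ r * p)) = 2 ^ r * p + r + 1 := by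
  have hmem : 2 ^ r * p + r + 1 ∈ {k | 0 < k ∧ ∀ S : List (ZMod (2 ^ r * p)),
      S.length = k → HasWZSS (U (2 ^ r * p)) S (2 ^ r * p)} :=
    ⟨by omega, fun S hS => by_contra fun hno =>
      absurd (length_eq_and_pcount_isOddMultiple_of_not_hasWZSS hr hp hp2 (by omega) hno).1
        (by omega)⟩
  refine le_antisymm (Nat.sInf_le hmem) (le_csInf ⟨_, hmem⟩ fun k ⟨_, hk⟩ => ?_)
  by_contra! hlt
  have hlen : ((zerosAndPowersOfTwo r p).take k).length = k := by
    have : 0 < 2 ^ r * p := Nat.mul_pos (by positivity) hp.pos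
    simp [zerosAndPowersOfTwo]
    omega
  exact not_hasWZSS_of_sublist_zerosAndPowersOfTwo hp hp2 (List.take_sublist _ _) (hk _ hlen)

theorem xor_of_eq_one_or_eq_two {c : ℕ → ℕ} {k : ℕ}
    (h : (∀ i ≤ k, c i = 1) ∨ ∃ m ≤ k, c m = 2 ∧ ∀ i ≤ k, i ≠ m → c i = 1) :
    Xor' (∀ i ≤ k, c i = 1) (∃! j, j ≤ k ∧ c j = 2 ∧ ∀ i ≤ k, i ≠ j → c i = 1) := by
  rcases h with h | ⟨m, hm, hm2, h⟩
  · refine Or.inl ⟨h, fun ⟨j, ⟨hj, hj2, _⟩, _⟩ => ?_⟩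
    have := h j hj
    omega
  · refine Or.inr ⟨⟨m, ⟨hm, hm2, h⟩, fun j ⟨hj, hj2, _⟩ => by_contra fun hjm => ?_⟩, fun h' => ?_⟩
    · have := h j hj hjm
      omega
    · have := h' m hm
      omega

/-- For `n = 2 ^ r * p`, `p` an odd prime, `r ≥ 2`: if `S` is a `U(n)`-extremal sequence
for the Gao constant, then exactly one of the following holds: (i) for each
`0 ≤ i ≤ r - 2` an odd multiple of `2 ^ i` occurs exactly once in `S`; or (ii) there is a
unique `j` with `0 ≤ j ≤ r - 2` such that odd multiples of `2 ^ j` occur exactly twice in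
`S`, while for each other `0 ≤ i ≤ r - 2` an odd multiple of `2 ^ i` occurs exactly once. -/
theorem odd_multiple_count_dichotomy (r p : ℕ) (hr : 2 ≤ r) (hp : p.Prime) (hpodd : p ≠ 2)
    (S : List (ZMod (2 ^ r * p)))
    (hS : IsGaoExtremal (2 ^ r * p) (U (2 ^ r * p)) S) :
    Xor'
      (∀ i ≤ r - 2, pcount (IsOddMultiple (2 ^ r * p) i) S = 1)
      (∃! j, j ≤ r - 2 ∧ pcount (IsOddMultiple (2 ^ r * p) j) S = 2 ∧
        ∀ i ≤ r - 2, i ≠ j → pcount (IsOddMultiple (2 ^ r * p) i) S = 1) := by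
  have hlen : S.length = 2 ^ r * p + r := by rw [hS.1, gaoC_units_eq hr hp hpodd]; rfl
  exact xor_of_eq_one_or_eq_two
    (length_eq_and_pcount_isOddMultiple_of_not_hasWZSS hr hp hpodd hlen.ge hS.2).2
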